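/- Let U ⊆ ℝ⁵ be an open set and A₁, A₂, A₃, A₄ : U → ℝ be C^∞ functions. Define the vector fields Xⁱ := ∂_{x_i} + A_i·∂_{x_5} on U for i = 1,2,3,4, and for i,j ∈ {1,2,3,4} the functions c_{ij} := ∂_{x_i}A_j − ∂_{x_j}A_i + A_i·∂_{x_5}A_j − A_j·∂_{x_5}A_i (so that [Xⁱ,Xʲ] = c_{ij}·∂_{x_5}). Let Z¹ := c_{42}·X³ + c_{34}·X² + c_{23}·X⁴. Then Z¹ has controlled divergence: there exist C^∞ functions g₂, g₃, g₄ : U → ℝ such that div(Z¹) = g₂·c_{34} + g₃·c_{42} + g₄·c_{23} on U. -/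

import Mathlib

/-- Partial derivative `∂_{x_i} g (x)` of `g : ℝ⁵ → ℝ` in the `i`-th coordinate direction. -/
noncomputable def pd5 (i : Fin 5) (g : (Fin 5 → ℝ) → ℝ) (x : Fin 5 → ℝ) : ℝ :=
  fderiv ℝ g x (Pi.single i 1)

/-- The bracket coefficients `c_{ij} = ∂_{x_i}A_j − ∂_{x_j}A_i + A_i ∂_{x_5}A_j − A_j ∂_{x_5}A_i`
(indices `i, j ∈ {1,2,3,4}` are represented by `Fin 4`, and `x₅` is coordinate `4 : Fin 5`),
so that `[Xⁱ, Xʲ] = c_{ij} ∂_{x_5}`. -/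
noncomputable def cbr5 (A : Fin 4 → (Fin 5 → ℝ) → ℝ) (i j : Fin 4) (x : Fin 5 → ℝ) : ℝ :=
  pd5 i.castSucc (A j) x - pd5 j.castSucc (A i) x
    + A i x * pd5 4 (A j) x - A j x * pd5 4 (A i) x

/-- The vector field `Xⁱ = ∂_{x_i} + A_i ∂_{x_5}` on `ℝ⁵` (for `i ∈ {1,2,3,4}`). -/
noncomputable def XF5 (A : Fin 4 → (Fin 5 → ℝ) → ℝ) (i : Fin 4) (x : Fin 5 → ℝ) :
    Fin 5 → ℝ :=
  (Pi.single i.castSucc 1 : Fin 5 → ℝ) + A i x • (Pi.single (4 : Fin 5) 1 : Fin 5 → ℝ)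

/-- The vector field `Z¹ = c_{42}·X³ + c_{34}·X² + c_{23}·X⁴` (0-based indices). -/
noncomputable def ZF5 (A : Fin 4 → (Fin 5 → ℝ) → ℝ) (x : Fin 5 → ℝ) : Fin 5 → ℝ :=
  cbr5 A 3 1 x • XF5 A 2 x + cbr5 A 2 3 x • XF5 A 1 x + cbr5 A 1 2 x • XF5 A 3 x

/-- The divergence `div(Z)(x) = ∑ₖ ∂_{x_k} Z_k(x)` of a vector field `Z` on `ℝ⁵`. -/
noncomputable def div5 (Z : (Fin 5 → ℝ) → (Fin 5 → ℝ)) (x : Fin 5 → ℝ) : ℝ :=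
  ∑ k : Fin 5, fderiv ℝ (fun y => Z y k) x (Pi.single k 1)

/-!
Write `Z¹ = Σ c_{jk} Xⁱ`, summed over the cyclic permutations `(i, j, k)` of `(2, 3, 4)`.
Since `div Xⁱ = ∂₅Aᵢ`, the product rule gives `div (c_{jk} Xⁱ) = Xⁱ(c_{jk}) + c_{jk} ∂₅Aᵢ`.
The Jacobi identity for `Xⁱ, Xʲ, Xᵏ`, together with `[Xⁱ, c ∂₅] = (Xⁱ(c) - c ∂₅Aᵢ) ∂₅`, gives
`Σ Xⁱ(c_{jk}) = Σ c_{jk} ∂₅Aᵢ`. Hence `div Z¹ = 2 Σ c_{jk} ∂₅Aᵢ`, i.e. `gᵢ = 2 ∂₅Aᵢ`.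
-/

section

variable {f : (Fin 5 → ℝ) → ℝ} {x : Fin 5 → ℝ}

theorem ContDiffOn.pd5 {m n : WithTop ℕ∞} {U : Set (Fin 5 → ℝ)} (hf : ContDiffOn ℝ m f U)
    (hU : IsOpen U) (hmn : n + 1 ≤ m) (i : Fin 5) : ContDiffOn ℝ n (pd5 i f) U :=
  (hf.fderiv_of_isOpen hU hmn).clm_apply contDiffOn_const

theorem ContDiffAt.differentiableAt_pd5 (hf : ContDiffAt ℝ 2 f x) (i : Fin 5) :
    DifferentiableAt ℝ (pd5 i f) x :=
  ((hf.fderiv_right (m := 1) le_rfl).clm_apply contDiffAt_const).differentiableAt one_ne_zero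

theorem ContDiffAt.pd5_comm (hf : ContDiffAt ℝ 2 f x) (i j : Fin 5) :
    pd5 i (pd5 j f) x = pd5 j (pd5 i f) x := by
  have hd : DifferentiableAt ℝ (fderiv ℝ f) x :=
    (hf.fderiv_right (m := 1) le_rfl).differentiableAt one_ne_zero
  have hflip (k l : Fin 5) :
      pd5 k (pd5 l f) x = fderiv ℝ (fderiv ℝ f) x (Pi.single k 1) (Pi.single l 1) := by
    unfold pd5
    rw [fderiv_clm_apply hd (differentiableAt_const _)]
    simp
  rw [hflip, hflip]
  exact hf.isSymmSndFDerivAt (by simp [minSmoothness_of_isRCLikeNormedField]) _ _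

theorem fderiv_apply_XF5 (A : Fin 4 → (Fin 5 → ℝ) → ℝ) (i : Fin 4) :
    fderiv ℝ f x (XF5 A i x) = pd5 i.castSucc f x + A i x * pd5 4 f x := by
  simp [XF5, pd5]

theorem differentiableAt_XF5 {A : Fin 4 → (Fin 5 → ℝ) → ℝ} {i : Fin 4}
    (hA : DifferentiableAt ℝ (A i) x) : DifferentiableAt ℝ (XF5 A i) x :=
  (differentiableAt_const _).add (hA.smul_const _)

theorem pd5_cbr5 {A : Fin 4 → (Fin 5 → ℝ) → ℝ} {i j : Fin 4} (hi : ContDiffAt ℝ 2 (A i) x)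
    (hj : ContDiffAt ℝ 2 (A j) x) (k : Fin 5) :
    pd5 k (cbr5 A i j) x =
      pd5 k (pd5 i.castSucc (A j)) x - pd5 k (pd5 j.castSucc (A i)) x
        + (pd5 k (A i) x * pd5 4 (A j) x + A i x * pd5 k (pd5 4 (A j)) x)
        - (pd5 k (A j) x * pd5 4 (A i) x + A j x * pd5 k (pd5 4 (A i)) x) := by
  have hdi := hi.differentiableAt two_ne_zero
  have hdj := hj.differentiableAt two_ne_zero
  have hD : HasFDerivAt (cbr5 A i j) _ x :=
    ((((hj.differentiableAt_pd5 i.castSucc).hasFDerivAt.sub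
        (hi.differentiableAt_pd5 j.castSucc).hasFDerivAt).add
      (hdi.hasFDerivAt.mul (hj.differentiableAt_pd5 4).hasFDerivAt)).sub
      (hdj.hasFDerivAt.mul (hi.differentiableAt_pd5 4).hasFDerivAt))
  rw [pd5, hD.fderiv]
  simp only [pd5, sub_apply, add_apply, smul_apply, smul_eq_mul]
  ring

theorem differentiableAt_cbr5 {A : Fin 4 → (Fin 5 → ℝ) → ℝ} {i j : Fin 4}
    (hi : ContDiffAt ℝ 2 (A i) x) (hj : ContDiffAt ℝ 2 (A j) x) :
    DifferentiableAt ℝ (cbr5 A i j) x :=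
  (((hj.differentiableAt_pd5 _).sub (hi.differentiableAt_pd5 _)).add
    ((hi.differentiableAt two_ne_zero).mul (hj.differentiableAt_pd5 _))).sub
    ((hj.differentiableAt two_ne_zero).mul (hi.differentiableAt_pd5 _))

theorem jacobi_XF5_cbr5 {A : Fin 4 → (Fin 5 → ℝ) → ℝ} {i j k : Fin 4}
    (hi : ContDiffAt ℝ 2 (A i) x) (hj : ContDiffAt ℝ 2 (A j) x) (hk : ContDiffAt ℝ 2 (A k) x) :
    fderiv ℝ (cbr5 A j k) x (XF5 A i x) + fderiv ℝ (cbr5 A k i) x (XF5 A j x)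
        + fderiv ℝ (cbr5 A i j) x (XF5 A k x) =
      cbr5 A j k x * pd5 4 (A i) x + cbr5 A k i x * pd5 4 (A j) x
        + cbr5 A i j x * pd5 4 (A k) x := by
  simp only [fderiv_apply_XF5, pd5_cbr5 hi hj, pd5_cbr5 hj hk, pd5_cbr5 hk hi]
  -- after symmetrising the mixed partials, the second-order terms cancel in pairs
  rw [hk.pd5_comm j.castSucc i.castSucc, hi.pd5_comm k.castSucc j.castSucc,
    hj.pd5_comm i.castSucc k.castSucc, hi.pd5_comm 4 j.castSucc, hi.pd5_comm 4 k.castSucc,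
    hj.pd5_comm 4 k.castSucc, hj.pd5_comm 4 i.castSucc, hk.pd5_comm 4 i.castSucc,
    hk.pd5_comm 4 j.castSucc]
  simp only [cbr5]
  ring

theorem div5_add {Z W : (Fin 5 → ℝ) → (Fin 5 → ℝ)} (hZ : DifferentiableAt ℝ Z x)
    (hW : DifferentiableAt ℝ W x) : div5 (fun y => Z y + W y) x = div5 Z x + div5 W x := by
  simp only [div5, Pi.add_apply, ← Finset.sum_add_distrib]
  refine Finset.sum_congr rfl fun k _ => ?_
  rw [fderiv_fun_add (differentiableAt_pi.1 hZ k) (differentiableAt_pi.1 hW k)]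
  rfl

theorem div5_smul {V : (Fin 5 → ℝ) → (Fin 5 → ℝ)} (hf : DifferentiableAt ℝ f x)
    (hV : DifferentiableAt ℝ V x) :
    div5 (fun y => f y • V y) x = fderiv ℝ f x (V x) + f x * div5 V x := by
  have hdecomp : fderiv ℝ f x (V x) = ∑ k, V x k * fderiv ℝ f x (Pi.single k 1) := by
    conv_lhs => rw [← Finset.univ_sum_single (V x)]
    refine (map_sum _ _ _).trans (Finset.sum_congr rfl fun k _ => ?_)
    rw [← smul_eq_mul, ← map_smul, ← Pi.single_smul', smul_eq_mul, mul_one]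
  simp only [div5, Pi.smul_apply, smul_eq_mul, hdecomp, Finset.mul_sum, ← Finset.sum_add_distrib]
  refine Finset.sum_congr rfl fun k _ => ?_
  rw [fderiv_fun_mul hf (differentiableAt_pi.1 hV k)]
  simp only [add_apply, smul_apply, smul_eq_mul]
  ring

theorem div5_XF5 {A : Fin 4 → (Fin 5 → ℝ) → ℝ} {i : Fin 4} (hA : DifferentiableAt ℝ (A i) x) :
    div5 (XF5 A i) x = pd5 4 (A i) x := by
  rw [show XF5 A i = fun y => Pi.single i.castSucc 1 + A i y • Pi.single 4 1 from rfl,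
    div5_add (differentiableAt_const _) (hA.smul_const _), div5_smul hA (differentiableAt_const _)]
  simp [div5, pd5]

end

/-- for smooth `A₁,A₂,A₃,A₄` on an open `U ⊆ ℝ⁵` and
`Z¹ = c_{42}·X³ + c_{34}·X² + c_{23}·X⁴`, the divergence of `Z¹` lies in the ideal generated by
`c_{34}, c_{42}, c_{23}`: there are smooth `g₂,g₃,g₄` with
`div(Z¹) = g₂·c_{34} + g₃·c_{42} + g₄·c_{23}` on `U`. -/
theorem controlled_divergence_dim5 (U : Set (Fin 5 → ℝ)) (hU : IsOpen U)
    (A : Fin 4 → (Fin 5 → ℝ) → ℝ)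
    (hA : ∀ i, ContDiffOn ℝ (⊤ : ℕ∞) (A i) U) :
    ∃ g₂ g₃ g₄ : (Fin 5 → ℝ) → ℝ,
      ContDiffOn ℝ (⊤ : ℕ∞) g₂ U ∧ ContDiffOn ℝ (⊤ : ℕ∞) g₃ U ∧
      ContDiffOn ℝ (⊤ : ℕ∞) g₄ U ∧
      ∀ x ∈ U, div5 (ZF5 A) x =
        g₂ x * cbr5 A 2 3 x + g₃ x * cbr5 A 3 1 x + g₄ x * cbr5 A 1 2 x := by
  have hg (i : Fin 4) : ContDiffOn ℝ (⊤ : ℕ∞) (fun y => 2 * pd5 4 (A i) y) U :=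
    contDiffOn_const.mul ((hA i).pd5 hU (by norm_cast) 4)
  refine ⟨_, _, _, hg 1, hg 2, hg 3, fun x hx => ?_⟩
  have hA2 (i : Fin 4) : ContDiffAt ℝ 2 (A i) x :=
    ((hA i).contDiffAt (hU.mem_nhds hx)).of_le (by norm_cast)
  have hAd (i : Fin 4) := (hA2 i).differentiableAt two_ne_zero
  have hsummand (i j k : Fin 4) : DifferentiableAt ℝ (fun y => cbr5 A j k y • XF5 A i y) x :=
    (differentiableAt_cbr5 (hA2 j) (hA2 k)).smul (differentiableAt_XF5 (hAd i))
  unfold ZF5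
  rw [div5_add ((hsummand 2 3 1).fun_add (hsummand 1 2 3)) (hsummand 3 1 2),
    div5_add (hsummand 2 3 1) (hsummand 1 2 3)]
  simp only [div5_smul (differentiableAt_cbr5 (hA2 _) (hA2 _)) (differentiableAt_XF5 (hAd _)),
    div5_XF5 (hAd _)]
  linear_combination jacobi_XF5_cbr5 (hA2 1) (hA2 2) (hA2 3)
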